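/- arXiv:1910.01454 — 2 statements merged into one kernel-verified Lean document; each statement's English description precedes it below -/
import Mathlib

section
/- Let C be a k-linear Hom-finite Krull-Schmidt additive category, let A be a class of isomorphism classes of indecomposable objects of C, and let F: A → A be a map such that for each indecomposable X in A there is a k-linear map η_X: Hom(X,FX) → k for which the bilinear pairing Hom(X,Y) × Hom(Y,FX) → k, (f,g) ↦ η_X(gf), is non-degenerate for every indecomposable Y in A. Then the assignments η_{X,Y}(f)(g) := η_X(gf) define isomorphisms Hom(X,Y) ≅ Hom(Y,FX)^* natural in X and Y, so F extends to a right Serre functor on the additive subcategory generated by A. -/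
/-!
The pairing `(f, g) ↦ η_X (f ≫ g)` on `Hom(X, Y) × Hom(Y, FX)` is non-degenerate between
finite-dimensional spaces, hence perfect. So `f ↦ η_X (f ≫ -)` is an isomorphism
`Hom(X, Y) ≅ Hom(Y, FX)^*`, and a morphism `a : X ⟶ X'` has a unique transpose
`F a : FX ⟶ FX'` characterised by `η_{X'} (g ≫ F a) = η_X (a ≫ g)` for all `g : X' ⟶ FX`.
Functoriality and naturality of `F` follow from this uniqueness.
-/

open CategoryTheory

universe u v

/-- A Krull-Schmidt category: every object is a finite biproduct of objects with
local endomorphism rings. -/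
def KrullSchmidt (C : Type u) [Category.{v} C] [Preadditive C]
    [Limits.HasFiniteBiproducts C] : Prop :=
  ∀ X : C, ∃ (n : ℕ) (f : Fin n → C),
    (∀ i, IsLocalRing (End (f i))) ∧ Nonempty (X ≅ Limits.biproduct f)

namespace CategoryTheory.Linear

variable {k : Type*} [Field k] {C : Type u} [Category.{v} C] [Preadditive C] [Linear k C]

noncomputable def compPairing {X T : C} (η : (X ⟶ T) →ₗ[k] k) (Y : C) :
    (X ⟶ Y) →ₗ[k] (Y ⟶ T) →ₗ[k] k :=
  (comp X Y T).compr₂ η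

@[simp]
lemma compPairing_apply {X Y T : C} (η : (X ⟶ T) →ₗ[k] k) (f : X ⟶ Y) (g : Y ⟶ T) :
    compPairing η Y f g = η (f ≫ g) :=
  rfl

lemma isPerfPair_compPairing {X Y T : C} [Module.Finite k (X ⟶ Y)] (η : (X ⟶ T) →ₗ[k] k)
    (hl : ∀ f : X ⟶ Y, f ≠ 0 → ∃ g : Y ⟶ T, η (f ≫ g) ≠ 0)
    (hr : ∀ g : Y ⟶ T, g ≠ 0 → ∃ f : X ⟶ Y, η (f ≫ g) ≠ 0) :
    (compPairing η Y).IsPerfPair := by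
  refine .of_injective ((injective_iff_map_eq_zero _).2 fun f hf => ?_)
    ((injective_iff_map_eq_zero _).2 fun g hg => ?_)
  · by_contra hf0
    obtain ⟨g, hg⟩ := hl f hf0
    exact hg (LinearMap.congr_fun hf g)
  · by_contra hg0
    obtain ⟨f, hf⟩ := hr g hg0
    exact hf (LinearMap.congr_fun hg f)

section SerreMap

variable {F : C → C} (η : ∀ X : C, (X ⟶ F X) →ₗ[k] k)

open Classical in
noncomputable def serreMap {X X' : C} (a : X ⟶ X') : F X ⟶ F X' :=
  if _ : (compPairing (η X') (F X)).IsPerfPair then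
    (compPairing (η X') (F X)).flip.toPerfPair.symm ((η X).comp (leftComp k (F X) a))
  else 0

variable {η}

lemma apply_comp_serreMap {X X' : C} [(compPairing (η X') (F X)).IsPerfPair] (a : X ⟶ X')
    (g : X' ⟶ F X) : η X' (g ≫ serreMap η a) = η X (a ≫ g) := by
  rw [serreMap, dif_pos ‹_›, ← compPairing_apply, LinearMap.apply_toPerfPair_flip]
  rfl

lemma eq_serreMap {X X' : C} [(compPairing (η X') (F X)).IsPerfPair] {a : X ⟶ X'}
    {h : F X ⟶ F X'} (hh : ∀ g : X' ⟶ F X, η X' (g ≫ h) = η X (a ≫ g)) :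
    h = serreMap η a :=
  (LinearMap.IsPerfPair.bijective_right (compPairing (η X') (F X))).injective <|
    LinearMap.ext fun g => by
      simp only [LinearMap.flip_apply, compPairing_apply, hh, apply_comp_serreMap]

lemma serreMap_id {X : C} [(compPairing (η X) (F X)).IsPerfPair] :
    serreMap η (𝟙 X) = 𝟙 (F X) :=
  (eq_serreMap fun g => by simp).symm

lemma serreMap_comp {X Y Z : C} [(compPairing (η Z) (F X)).IsPerfPair]
    [(compPairing (η Y) (F X)).IsPerfPair] [(compPairing (η Z) (F Y)).IsPerfPair]
    (a : X ⟶ Y) (b : Y ⟶ Z) : serreMap η (a ≫ b) = serreMap η a ≫ serreMap η b :=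
  (eq_serreMap fun g => by
    rw [← Category.assoc, apply_comp_serreMap, ← Category.assoc, apply_comp_serreMap,
      Category.assoc]).symm

end SerreMap

end CategoryTheory.Linear

/-- Given a class `P` of (isomorphism classes of) indecomposable objects, a map `FF` on
objects of `P` and linear forms `η_X : Hom(X, FF X) → k` whose induced pairings
`Hom(X,Y) × Hom(Y, FF X) → k`, `(f,g) ↦ η_X(g ∘ f)` are non-degenerate, the assignments
`η_{X,Y}(f)(g) := η_X(g ∘ f)` are bijections `Hom(X,Y) ≅ Hom(Y, FF X)^*` natural in `X`
and `Y`; in particular `FF` extends to morphisms, i.e. it is a right Serre functor on the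
subcategory generated by `P`. -/
theorem rightSerre_of_nondegenerate_pairing (k : Type*) [Field k] (C : Type u)
    [Category.{v} C] [Preadditive C] [CategoryTheory.Linear k C]
    [∀ X Y : C, Module.Finite k (X ⟶ Y)] [Limits.HasFiniteBiproducts C]
    (hKS : KrullSchmidt C)
    (P : C → Prop) (hP : ∀ X, P X → IsLocalRing (End X))
    (FF : C → C) (hFP : ∀ X, P X → P (FF X))
    (η : ∀ X : C, (X ⟶ FF X) →ₗ[k] k)
    (hnd : ∀ X Y : C, P X → P Y →
      (∀ f : X ⟶ Y, f ≠ 0 → ∃ g : Y ⟶ FF X, η X (f ≫ g) ≠ 0) ∧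
      (∀ g : Y ⟶ FF X, g ≠ 0 → ∃ f : X ⟶ Y, η X (f ≫ g) ≠ 0)) :
    ∃ Fmap : ∀ (X X' : C), (X ⟶ X') → (FF X ⟶ FF X'),
      (∀ X : C, P X → Fmap X X (𝟙 X) = 𝟙 (FF X)) ∧
      (∀ (X Y Z : C), P X → P Y → P Z → ∀ (a : X ⟶ Y) (b : Y ⟶ Z),
        Fmap X Z (a ≫ b) = Fmap X Y a ≫ Fmap Y Z b) ∧
      (∀ X Y : C, P X → P Y →
        Function.Bijective
          (fun f : X ⟶ Y => (η X).comp (CategoryTheory.Linear.leftComp k (FF X) f))) ∧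
      (∀ (X Y Y' : C), P X → P Y → P Y' → ∀ (b : Y ⟶ Y') (u : X ⟶ Y) (g : Y' ⟶ FF X),
        η X ((u ≫ b) ≫ g) = η X (u ≫ b ≫ g)) ∧
      (∀ (X X' Y : C), P X → P X' → P Y → ∀ (a : X ⟶ X') (u : X' ⟶ Y) (g : Y ⟶ FF X),
        η X ((a ≫ u) ≫ g) = η X' (u ≫ g ≫ Fmap X X' a)) := by
  have perfect : ∀ X Y, P X → P Y → (Linear.compPairing (η X) Y).IsPerfPair :=
    fun X Y hX hY => Linear.isPerfPair_compPairing (η X) (hnd X Y hX hY).1 (hnd X Y hX hY).2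
  refine ⟨fun _ _ => Linear.serreMap η, fun X hX => ?_, fun X Y Z hX hY hZ a b => ?_,
    fun X Y hX hY => ?_, fun _ _ _ _ _ _ _ _ _ => by rw [Category.assoc],
    fun X X' Y hX hX' _ a u g => ?_⟩
  · have := perfect X (FF X) hX (hFP X hX)
    exact Linear.serreMap_id
  · have := perfect Z (FF X) hZ (hFP X hX)
    have := perfect Y (FF X) hY (hFP X hX)
    have := perfect Z (FF Y) hZ (hFP Y hY)
    exact Linear.serreMap_comp a b
  · have := perfect X Y hX hY
    exact LinearMap.IsPerfPair.bijective_left (Linear.compPairing (η X) Y)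
  · have := perfect X' (FF X) hX' (hFP X hX)
    dsimp only
    rw [← Category.assoc, Linear.apply_comp_serreMap, Category.assoc]
end

section
/- Let C be an (d+2)-angulated category with a right Serre functor F, and let A_0 →^{α_0} A_1 → ⋯ → A_{d+1} →^{α_{d+1}} Σ^d A_0 be an (d+2)-angle. Suppose in a morphism of (d+2)-angles from the left rotation of this (d+2)-angle to an (d+2)-angle FA_0 →^{Fα_0} FA_1 →^{β_1} B_2 → ⋯ → B_{d+1} →^{β_{d+1}} Σ^d FA_0, there exist φ: A_0 → Σ^{-d}B_{d+1} and ϕ: A_{d+1} → B_d with Σ^d φ ∘ α_{d+1} = β_d ∘ ϕ, and intermediate morphisms δ_i: A_i → B_{i} as provided by axiom (N3). Then η_{A_d}(ω_d ∘ ϕ ∘ α_d) = (-1)^d η_{A_0}(Σ^{-d}β_{d+1} ∘ φ), where ω_i: B_i → FA_i are the connecting morphisms satisfying Fα_{i-1} ∘ ω_{i-1} = ω_i ∘ β_{i-1}. -/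
open CategoryTheory

universe u v

/-- An `(d+2)-Σᵈ`-sequence: objects `A_0, …, A_{d+1}` with morphisms
`A_0 → A_1 → ⋯ → A_{d+1}` and `A_{d+1} → Σᵈ A_0`. -/
structure Angle (C : Type u) [Category.{v} C] (d : ℕ) (S : C ⥤ C) where
  obj : Fin (d + 2) → C
  mor : ∀ i : Fin (d + 1), obj i.castSucc ⟶ obj i.succ
  last : obj (Fin.last (d + 1)) ⟶ S.obj (obj ⟨0, by omega⟩)

/-- The data of an `(d+2)`-angulated structure on `C` with suspension `S`: a class of
distinguished `(d+2)`-angles such that every morphism extends to a distinguished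
`(d+2)`-angle (axiom (N1)(c)) and every commutative square on the first morphisms of two
distinguished `(d+2)`-angles extends to a morphism of `(d+2)`-angles (axiom (N3)). -/
structure AngStruct (C : Type u) [Category.{v} C] (d : ℕ) (S : C ⥤ C) where
  dist : Set (Angle C d S)
  extend : ∀ {A B : C} (f : A ⟶ B), ∃ T ∈ dist,
      ∃ (e0 : T.obj ⟨0, by omega⟩ ≅ A) (e1 : T.obj ⟨1, by omega⟩ ≅ B),
        T.mor ⟨0, by omega⟩ ≫ e1.hom = e0.hom ≫ f
  complete : ∀ T ∈ dist, ∀ U ∈ dist,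
      ∀ (φ0 : T.obj ⟨0, by omega⟩ ⟶ U.obj ⟨0, by omega⟩)
        (φ1 : T.obj ⟨1, by omega⟩ ⟶ U.obj ⟨1, by omega⟩),
      T.mor ⟨0, by omega⟩ ≫ φ1 = φ0 ≫ U.mor ⟨0, by omega⟩ →
      ∃ φ : ∀ i : Fin (d + 2), T.obj i ⟶ U.obj i,
        φ ⟨0, by omega⟩ = φ0 ∧ φ ⟨1, by omega⟩ = φ1 ∧
        (∀ i : Fin (d + 1), T.mor i ≫ φ i.succ = φ i.castSucc ≫ U.mor i) ∧
        T.last ≫ S.map (φ ⟨0, by omega⟩) = φ (Fin.last (d + 1)) ≫ U.last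

/-- `f` lies in the Jacobson radical of the category. -/
def InRad {C : Type u} [Category.{v} C] [Preadditive C] {A B : C} (f : A ⟶ B) : Prop :=
  ∀ g : B ⟶ A, IsIso (𝟙 A - f ≫ g)

/-- `f : A → B` is left almost split. -/
def LeftAlmostSplit {C : Type u} [Category.{v} C] {A B : C} (f : A ⟶ B) : Prop :=
  ¬ IsSplitMono f ∧ ∀ ⦃Z : C⦄ (g : A ⟶ Z), ¬ IsSplitMono g → ∃ h : B ⟶ Z, f ≫ h = g

/-- `f : A → B` is right almost split. -/
def RightAlmostSplit {C : Type u} [Category.{v} C] {A B : C} (f : A ⟶ B) : Prop :=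
  ¬ IsSplitEpi f ∧ ∀ ⦃Z : C⦄ (g : Z ⟶ B), ¬ IsSplitEpi g → ∃ h : Z ⟶ A, h ≫ f = g

/-- An Auslander-Reiten `(d+2)`-angle: `α_0` is left almost split, `α_d` is right almost
split and the middle morphisms `α_1, …, α_{d-1}` lie in the radical. -/
def IsARAngle {C : Type u} [Category.{v} C] [Preadditive C] {d : ℕ} {S : C ⥤ C}
    (T : Angle C d S) : Prop :=
  LeftAlmostSplit (T.mor ⟨0, by omega⟩) ∧ RightAlmostSplit (T.mor (Fin.last d)) ∧
  ∀ i : Fin (d + 1), 0 < (i : ℕ) → (i : ℕ) < d → InRad (T.mor i)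

/-- A right Serre functor: natural isomorphisms `Hom(A,B) ≅ Hom(B,FA)^*`. -/
structure RightSerre (k : Type*) [Field k] (C : Type u) [Category.{v} C]
    [Preadditive C] [CategoryTheory.Linear k C] (F : C ⥤ C) where
  η : ∀ A B : C, (A ⟶ B) →ₗ[k] Module.Dual k (B ⟶ F.obj A)
  bij : ∀ A B : C, Function.Bijective (η A B)
  natB : ∀ {A B B' : C} (b : B ⟶ B') (u : A ⟶ B) (g : B' ⟶ F.obj A),
      η A B' (u ≫ b) g = η A B u (b ≫ g)
  natA : ∀ {A A' B : C} (a : A ⟶ A') (u : A' ⟶ B) (g : B ⟶ F.obj A),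
      η A B (a ≫ u) g = η A' B u (g ≫ F.map a)

/-! The Serre duality pairing is cyclic: `η_A(g ∘ f) = η_B(Ff ∘ g)`. Applying this to
`α_i` and using the two ladders `ω` and `δ`, the trace `η_{A_i}(ω_i ∘ δ_i ∘ α_i)` does not
depend on `i`. At `i = 0` the rotation square identifies `Σ^{-d}β_{d+1} ∘ φ` with
`(-1)^d ω_0 ∘ δ_0 ∘ α_0`, and the two signs cancel. -/

theorem Fin.apply_last_eq_apply_zero {α : Type*} {n : ℕ} (t : Fin (n + 1) → α)
    (h : ∀ i : Fin n, t i.castSucc = t i.succ) : t (Fin.last n) = t 0 := by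
  suffices ∀ i, t i = t 0 from this _
  intro i
  induction i using Fin.induction with
  | zero => rfl
  | succ i ih => rw [← h i, ih]

theorem CategoryTheory.Equivalence.unit_app_comp_inverse_map_functor_map_comp_unitInv_app_assoc
    {C D : Type*} [Category C] [Category D] (E : C ≌ D) {X Y Z : C} (f : X ⟶ Y) (h : Y ⟶ Z) :
    E.unitIso.hom.app X ≫ E.inverse.map (E.functor.map f) ≫ E.unitIso.inv.app Y ≫ h = f ≫ h := by
  simp

namespace RightSerre

variable {k : Type*} [Field k] {C : Type u} [Category.{v} C] [Preadditive C]
  [CategoryTheory.Linear k C] {F : C ⥤ C} (RS : RightSerre k C F)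

/-- The trace map `η_X` of the paper. -/
def trace (X : C) : Module.Dual k (X ⟶ F.obj X) :=
  RS.η X X (𝟙 X)

theorem trace_comp_comm {A B : C} (f : A ⟶ B) (g : B ⟶ F.obj A) :
    RS.trace A (f ≫ g) = RS.trace B (g ≫ F.map f) :=
  calc RS.trace A (f ≫ g) = RS.η A B (𝟙 A ≫ f) g := (RS.natB f (𝟙 A) g).symm
    _ = RS.η A B (f ≫ 𝟙 B) g := by rw [Category.id_comp, Category.comp_id]
    _ = RS.trace B (g ≫ F.map f) := RS.natA f (𝟙 B) g

theorem trace_mor_comp_comp_last_eq_zero {d : ℕ} {S S' : C ⥤ C}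
    (T : Angle C d S) (U : Angle C d S')
    (ω : ∀ i : Fin (d + 2), U.obj i ⟶ F.obj (T.obj i))
    (hω : ∀ i : Fin (d + 1), U.mor i ≫ ω i.succ = ω i.castSucc ≫ F.map (T.mor i))
    (δ : ∀ i : Fin (d + 1), T.obj i.succ ⟶ U.obj i.castSucc)
    (hδ : ∀ i : Fin d, T.mor i.succ ≫ δ i.succ = δ i.castSucc ≫ U.mor i.castSucc) :
    RS.trace _ (T.mor (Fin.last d) ≫ δ (Fin.last d) ≫ ω (Fin.last d).castSucc) =
      RS.trace _ (T.mor 0 ≫ δ 0 ≫ ω (0 : Fin (d + 1)).castSucc) := by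
  refine Fin.apply_last_eq_apply_zero (fun i ↦ RS.trace _ (T.mor i ≫ δ i ≫ ω i.castSucc))
    fun i ↦ ?_
  have hstep : (δ i.castSucc ≫ ω i.castSucc.castSucc) ≫ F.map (T.mor i.castSucc) =
      T.mor i.succ ≫ δ i.succ ≫ ω i.succ.castSucc := by
    rw [Category.assoc, ← hω, reassoc_of% hδ]
    rfl
  rw [trace_comp_comm, hstep]
  rfl

end RightSerre

/-- Step 3 in the proof that a Serre functor is `(d+2)`-angulated: given an `(d+2)`-angle
`A_•`, an `(d+2)`-angle `B_•` starting with `FA_0 → FA_1` (identified via `ω_0, ω_1`),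
connecting morphisms `ω_i : B_i → FA_i`, a morphism `(δ_i, ϕ, Σᵈφ)` from the left rotation
of `A_•` to `B_•` (with `ϕ = δ_d : A_{d+1} → B_d` and `Σᵈφ ∘ α_{d+1} = β_d ∘ ϕ`), one has
`η_{A_d}(ω_d ∘ ϕ ∘ α_d) = (-1)^d η_{A_0}(Σ^{-d}β_{d+1} ∘ φ)`. -/
theorem serre_step3 (k : Type*) [Field k] (C : Type u)
    [Category.{v} C] [Preadditive C] [CategoryTheory.Linear k C]
    [∀ X Y : C, Module.Finite k (X ⟶ Y)] [Limits.HasFiniteBiproducts C]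
    (hKS : KrullSchmidt C) (d : ℕ) (E : C ≌ C) (Ang : AngStruct C d E.functor)
    (FF : C ⥤ C) (RS : RightSerre k C FF)
    (T : Angle C d E.functor) (hT : T ∈ Ang.dist)
    (U : Angle C d E.functor) (hU : U ∈ Ang.dist)
    (ω : ∀ i : Fin (d + 2), U.obj i ⟶ FF.obj (T.obj i))
    (hω : ∀ i : Fin (d + 1), U.mor i ≫ ω i.succ = ω i.castSucc ≫ FF.map (T.mor i))
    (hω0 : IsIso (ω ⟨0, by omega⟩)) (hω1 : IsIso (ω ⟨1, by omega⟩))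
    (δ : ∀ i : Fin (d + 1), T.obj i.succ ⟶ U.obj i.castSucc)
    (hδ : ∀ i : Fin d, T.mor i.succ ≫ δ i.succ = δ i.castSucc ≫ U.mor i.castSucc)
    (φ' : E.functor.obj (T.obj ⟨0, by omega⟩) ⟶ U.obj (Fin.last (d + 1)))
    (hsq : T.last ≫ φ' = δ (Fin.last d) ≫ U.mor (Fin.last d))
    (hrot : φ' ≫ U.last =
      ((-1 : ℤ) ^ d) • E.functor.map (T.mor ⟨0, by omega⟩ ≫ δ ⟨0, by omega⟩)) :
    RS.η (T.obj ((Fin.last d).castSucc)) (T.obj ((Fin.last d).castSucc))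
        (𝟙 (T.obj ((Fin.last d).castSucc)))
        (T.mor (Fin.last d) ≫ δ (Fin.last d) ≫ ω ((Fin.last d).castSucc)) =
      (-1 : k) ^ d *
        RS.η (T.obj ⟨0, by omega⟩) (T.obj ⟨0, by omega⟩) (𝟙 (T.obj ⟨0, by omega⟩))
          (E.unitIso.hom.app (T.obj ⟨0, by omega⟩) ≫ E.inverse.map (φ' ≫ U.last) ≫
            E.unitIso.inv.app (U.obj ⟨0, by omega⟩) ≫ ω ⟨0, by omega⟩) := by
  have : E.inverse.Additive := E.inverse.additive_of_preserves_binary_products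
  have hrhs : E.unitIso.hom.app (T.obj ⟨0, by omega⟩) ≫ E.inverse.map (φ' ≫ U.last) ≫
      E.unitIso.inv.app (U.obj ⟨0, by omega⟩) ≫ ω ⟨0, by omega⟩ =
      ((-1 : ℤ) ^ d) • (T.mor 0 ≫ δ 0 ≫ ω (0 : Fin (d + 1)).castSucc) := by
    rw [hrot, Functor.map_zsmul, Preadditive.zsmul_comp, Preadditive.comp_zsmul]
    exact congrArg _ ((E.unit_app_comp_inverse_map_functor_map_comp_unitInv_app_assoc _ _).trans
      (Category.assoc _ _ _))
  have hlhs := RS.trace_mor_comp_comp_last_eq_zero T U ω hω δ hδ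
  change RS.trace _ _ = _ * RS.trace (T.obj (0 : Fin (d + 1)).castSucc) _
  rw [hrhs, hlhs, map_zsmul, zsmul_eq_mul]
  simp [← mul_assoc, ← mul_pow]
end
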